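/- arXiv:2406.09137 — 5 statements merged into one kernel-verified Lean document; each statement's English description precedes it below -/
import Mathlib

section
/- Let ε be a real number with 0 < ε ≤ 1/11 and let A, B be finite sets that are in ε-agreement, i.e., |A △ B| < ε·max(|A|, |B|). Then |A \ B| ≤ 1.1·ε·|A| and |B \ A| ≤ 1.1·ε·|B|. -/
open scoped symmDiff

/-- Pure real-number arithmetic core. -/
lemma agreement_arith (ε a d m s : ℝ) (hε0 : 0 < ε) (hε1 : ε ≤ 1 / 11)
    (hm0 : 0 ≤ m) (hma : m ≤ a + d) (hd : d < ε * m) (hs : s ≤ d) :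
    s ≤ 1.1 * ε * a := by
  nlinarith [mul_nonneg hε0.le hm0, mul_le_mul_of_nonneg_left hma hε0.le,
    mul_le_mul_of_nonneg_right hε1 (mul_nonneg hε0.le hm0)]

/-- If `0 < ε ≤ 1/11` and `A, B` are in `ε`-agreement, i.e.
`|A △ B| < ε·max(|A|,|B|)`, then `|A \ B| ≤ 1.1·ε·|A|` and `|B \ A| ≤ 1.1·ε·|B|`. -/
theorem sdiff_card_le_of_agreement {α : Type*} [DecidableEq α] (ε : ℝ)
    (hε0 : 0 < ε) (hε1 : ε ≤ 1 / 11) (A B : Finset α)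
    (h : ((A ∆ B).card : ℝ) < ε * (max A.card B.card : ℕ)) :
    ((A \ B).card : ℝ) ≤ 1.1 * ε * (A.card : ℝ) ∧
    ((B \ A).card : ℝ) ≤ 1.1 * ε * (B.card : ℝ) := by
  have hsub1 : A \ B ⊆ A ∆ B := by
    intro x hx
    simp only [Finset.mem_sdiff] at hx
    simp [Finset.mem_symmDiff, hx.1, hx.2]
  have hsub2 : B \ A ⊆ A ∆ B := by
    intro x hx
    simp only [Finset.mem_sdiff] at hx
    simp [Finset.mem_symmDiff, hx.1, hx.2]
  have hAm : A.card ≤ max A.card B.card := le_max_left _ _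
  have hBm : B.card ≤ max A.card B.card := le_max_right _ _
  -- max ≤ card + symmDiff
  have hmA : max A.card B.card ≤ A.card + (A ∆ B).card := by
    rcases max_cases A.card B.card with ⟨he, _⟩ | ⟨he, _⟩
    · rw [he]; exact Nat.le_add_right _ _
    · rw [he]
      calc B.card ≤ (B \ A).card + A.card := Finset.card_le_card_sdiff_add_card
        _ ≤ (A ∆ B).card + A.card := by
            exact Nat.add_le_add_right (Finset.card_le_card hsub2) _
        _ = A.card + (A ∆ B).card := Nat.add_comm _ _
  have hmB : max A.card B.card ≤ B.card + (A ∆ B).card := by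
    rcases max_cases A.card B.card with ⟨he, _⟩ | ⟨he, _⟩
    · rw [he]
      calc A.card ≤ (A \ B).card + B.card := Finset.card_le_card_sdiff_add_card
        _ ≤ (A ∆ B).card + B.card := by
            exact Nat.add_le_add_right (Finset.card_le_card hsub1) _
        _ = B.card + (A ∆ B).card := Nat.add_comm _ _
    · rw [he]; exact Nat.le_add_right _ _
  constructor
  · exact agreement_arith ε A.card ((A ∆ B).card : ℝ) ((max A.card B.card : ℕ) : ℝ) ((A \ B).card : ℝ)
      hε0 hε1 (by positivity) (by exact_mod_cast hmA) h
      (by exact_mod_cast Finset.card_le_card hsub1)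
  · exact agreement_arith ε B.card ((A ∆ B).card : ℝ) ((max A.card B.card : ℕ) : ℝ) ((B \ A).card : ℝ)
      hε0 hε1 (by positivity) (by exact_mod_cast hmB) h
      (by exact_mod_cast Finset.card_le_card hsub2)
end

section
/- Let ε be a real number with 0 < ε ≤ 1 and let A, B, C be finite sets satisfying |B| ≤ (1 + ε/10^13)·|C|, |A ∩ C| ≥ (1 − 2ε/10^4)·|C|, and |A \ B| < (ε/(8·10^4))·|A|. Then |A| < (1 + ε/(2·10^4))·|C| and |A \ C| < (ε/10^3)·|A|. -/
open scoped symmDiff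

/-- If `0 < ε ≤ 1`, `|B| ≤ (1 + ε/10^13)·|C|`, `|A ∩ C| ≥ (1 − 2ε/10^4)·|C|`,
and `|A \ B| < (ε/(8·10^4))·|A|`, then `|A| < (1 + ε/(2·10^4))·|C|` and
`|A \ C| < (ε/10^3)·|A|`. -/
theorem card_bounds_of_high_degree {α : Type*} [DecidableEq α] (ε : ℝ)
    (hε0 : 0 < ε) (hε1 : ε ≤ 1) (A B C : Finset α)
    (hB : (B.card : ℝ) ≤ (1 + ε / 10 ^ 13) * (C.card : ℝ))
    (hAC : (1 - 2 * ε / 10 ^ 4) * (C.card : ℝ) ≤ ((A ∩ C).card : ℝ))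
    (hAB : ((A \ B).card : ℝ) < ε / (8 * 10 ^ 4) * (A.card : ℝ)) :
    (A.card : ℝ) < (1 + ε / (2 * 10 ^ 4)) * (C.card : ℝ) ∧
    ((A \ C).card : ℝ) < ε / 10 ^ 3 * (A.card : ℝ) := by
  have hApos : (0 : ℝ) < A.card := by
    by_contra h
    push_neg at h
    have h0 : (A.card : ℝ) = 0 := le_antisymm h (by positivity)
    have : (0 : ℝ) ≤ ((A \ B).card : ℝ) := by positivity
    nlinarith
  have hsplit : (A.card : ℝ) ≤ ((A \ B).card : ℝ) + (B.card : ℝ) := by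
    have h1 : A ⊆ (A \ B) ∪ B := by
      intro x hx
      by_cases hb : x ∈ B
      · exact Finset.mem_union.2 (Or.inr hb)
      · exact Finset.mem_union.2 (Or.inl (Finset.mem_sdiff.2 ⟨hx, hb⟩))
    have h2 : A.card ≤ ((A \ B) ∪ B).card := Finset.card_le_card h1
    have h3 : ((A \ B) ∪ B).card ≤ (A \ B).card + B.card := Finset.card_union_le _ _
    exact_mod_cast le_trans h2 h3
  have hCpos : (0 : ℝ) ≤ C.card := by positivity
  have hA_lt : (A.card : ℝ) < (1 + ε / (2 * 10 ^ 4)) * (C.card : ℝ) := by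
    nlinarith [sq_nonneg ε, mul_pos hε0 hApos]
  refine ⟨hA_lt, ?_⟩
  have hsd : ((A \ C).card : ℝ) + ((A ∩ C).card : ℝ) = (A.card : ℝ) := by
    have := Finset.sdiff_union_inter A C
    have hd : Disjoint (A \ C) (A ∩ C) := Finset.sdiff_disjoint.mono_right
      Finset.inter_subset_right
    have := Finset.card_union_of_disjoint hd
    rw [Finset.sdiff_union_inter] at this
    exact_mod_cast this.symm
  have hACle : ((A ∩ C).card : ℝ) ≤ (A.card : ℝ) := by
    exact_mod_cast Finset.card_le_card (Finset.inter_subset_left)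
  nlinarith [mul_pos hε0 hApos, mul_nonneg hε0.le hCpos]
end

section
/- There exists a real constant ε₀ > 0 such that for every real ε with 0 < ε < ε₀, every simple graph G on a finite vertex set, every nontrivial cluster C of the agreement decomposition of G with parameter ε, and every vertex u ∈ C, it holds that |N(u) ∩ C| ≥ (1 − 3ε)·|N(u)|. -/
open scoped symmDiff Classical

/-- Two vertices `u, v` are in `ε`-agreement in `G` if
`|N(u) △ N(v)| < ε·max(|N(u)|, |N(v)|)`. -/
def InAgreement {V : Type*} [Fintype V] [DecidableEq V]
    (G : SimpleGraph V) [DecidableRel G.Adj] (ε : ℝ) (u v : V) : Prop :=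
  ((G.neighborFinset u ∆ G.neighborFinset v).card : ℝ) <
    ε * (max (G.neighborFinset u).card (G.neighborFinset v).card : ℕ)

/-- A vertex is `ε`-heavy if it is in `ε`-agreement with more than a
`(1 − ε)`-fraction of its neighbors. -/
noncomputable def Heavy {V : Type*} [Fintype V] [DecidableEq V]
    (G : SimpleGraph V) [DecidableRel G.Adj] (ε : ℝ) (u : V) : Prop :=
  (1 - ε) * ((G.neighborFinset u).card : ℝ) <
    (((G.neighborFinset u).filter (fun v => InAgreement G ε u v)).card : ℝ)

/-- The graph `G̃` obtained from `G` by deleting every edge whose endpoints are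
not in `ε`-agreement and then every remaining edge both of whose endpoints are
`ε`-light. -/
noncomputable def tildeGraph {V : Type*} [Fintype V] [DecidableEq V]
    (G : SimpleGraph V) [DecidableRel G.Adj] (ε : ℝ) : SimpleGraph V where
  Adj u v := G.Adj u v ∧ InAgreement G ε u v ∧ (Heavy G ε u ∨ Heavy G ε v)
  symm := ⟨by
    intro u v ⟨h1, h2, h3⟩
    refine ⟨h1.symm, ?_, h3.symm⟩
    unfold InAgreement at h2 ⊢
    rwa [symmDiff_comm, max_comm]⟩
  loopless := ⟨fun u h => G.irrefl h.1⟩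

/-- `C` is a cluster of the agreement decomposition of `G` with parameter `ε`:
the vertex set of a connected component of `G̃`. -/
noncomputable def IsCluster {V : Type*} [Fintype V] [DecidableEq V]
    (G : SimpleGraph V) [DecidableRel G.Adj] (ε : ℝ) (C : Finset V) : Prop :=
  ∃ v : V, C = Finset.univ.filter (fun w => (tildeGraph G ε).Reachable v w)

/-!
A vertex `u` of a nontrivial cluster has a `G̃`-neighbour `v`, and one of `u, v` is heavy.
The agreeing neighbours of a heavy vertex are `G̃`-neighbours of it, so they lie in the cluster.
If `u` is heavy this already gives `(1 - ε)|N(u)|` neighbours in the cluster. If `v` is heavy,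
then `N(u)` differs from `N(v)` in fewer than `ε max(|N(u)|, |N(v)|)` vertices and all but
`ε|N(v)|` vertices of `N(v)` lie in the cluster; since `max(|N(u)|, |N(v)|) < |N(u)| / (1 - ε)`,
this loses at most `3ε|N(u)|` for `ε ≤ 1/3`.
-/

namespace Finset

variable {α : Type*} [DecidableEq α]

theorem card_le_card_inter_add_card_sdiff_add_card_sdiff (A B S : Finset α) :
    #A ≤ #(A ∩ S) + #(A \ B) + #(B \ S) := by
  calc #A = #(A ∩ S) + #(A \ S) := (card_inter_add_card_sdiff A S).symm
    _ ≤ #(A ∩ S) + #(A \ B ∪ B \ S) := by gcongr; exact sdiff_triangle A B S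
    _ ≤ #(A ∩ S) + #(A \ B) + #(B \ S) := by rw [add_assoc]; gcongr; exact card_union_le _ _

theorem card_le_card_add_card_symmDiff (A B : Finset α) : #B ≤ #A + #(A ∆ B) :=
  calc #B ≤ #(B \ A) + #A := card_le_card_sdiff_add_card
    _ ≤ #A + #(A ∆ B) := by rw [add_comm]; gcongr; exact le_sup_right

theorem one_sub_three_mul_card_le_card_inter {A B S : Finset α} {ε : ℝ} (hε : 0 ≤ ε)
    (hε₃ : ε ≤ 1 / 3) (hSB : S ⊆ B) (hAB : (#(A ∆ B) : ℝ) < ε * (max #A #B : ℕ))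
    (hS : (1 - ε) * #B < #S) : (1 - 3 * ε) * #A ≤ #(A ∩ S) := by
  rw [Nat.cast_max] at hAB
  set m : ℝ := max #A #B
  have hcover : (#A : ℝ) ≤ #(A ∩ S) + #(A \ B) + #(B \ S) := by
    exact_mod_cast card_le_card_inter_add_card_sdiff_add_card_sdiff A B S
  have hAB_sdiff : (#(A \ B) : ℝ) ≤ #(A ∆ B) := by exact_mod_cast card_le_card le_sup_left
  have hBS : (#(B \ S) : ℝ) + #S = #B := by exact_mod_cast card_sdiff_add_card_eq_card hSB
  have hAm : (#A : ℝ) ≤ m := le_max_left _ _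
  have hBm : (#B : ℝ) ≤ m := le_max_right _ _
  have hm : m ≤ #A + #(A ∆ B) := by
    have : (#B : ℝ) ≤ #A + #(A ∆ B) := by exact_mod_cast card_le_card_add_card_symmDiff A B
    exact max_le (by linarith [(#(A ∆ B)).cast_nonneg (α := ℝ)]) this
  have hm_le : 2 * m ≤ 3 * #A := by
    have hm₀ : 0 ≤ m := (Nat.cast_nonneg _).trans hAm
    nlinarith [mul_le_mul_of_nonneg_right hε₃ hm₀]
  nlinarith [mul_le_mul_of_nonneg_left hm_le hε, mul_le_mul_of_nonneg_left hBm hε]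

end Finset

open Finset

section AgreementDecomposition

variable {V : Type*} [Fintype V] [DecidableEq V] {G : SimpleGraph V} [DecidableRel G.Adj]
  {ε : ℝ} {C : Finset V} {u v : V}

theorem IsCluster.mem_of_reachable (hC : IsCluster G ε C) (hu : u ∈ C)
    (huv : (tildeGraph G ε).Reachable u v) : v ∈ C := by
  obtain ⟨r, rfl⟩ := hC
  simp only [mem_filter, mem_univ, true_and] at hu ⊢
  exact hu.trans huv

theorem IsCluster.reachable (hC : IsCluster G ε C) (hu : u ∈ C) (hv : v ∈ C) :
    (tildeGraph G ε).Reachable u v := by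
  obtain ⟨r, rfl⟩ := hC
  simp only [mem_filter, mem_univ, true_and] at hu hv
  exact hu.symm.trans hv

theorem IsCluster.exists_adj (hC : IsCluster G ε C) (hC₁ : 1 < #C) (hu : u ∈ C) :
    ∃ v, (tildeGraph G ε).Adj u v := by
  obtain ⟨w, hw, hwu⟩ := exists_mem_ne hC₁ u
  obtain ⟨p⟩ := hC.reachable hu hw
  exact ⟨_, p.adj_snd (SimpleGraph.Walk.not_nil_of_ne hwu.symm)⟩

theorem filter_inAgreement_subset_of_heavy (hC : IsCluster G ε C) (hu : u ∈ C)
    (hheavy : Heavy G ε u) : (G.neighborFinset u).filter (InAgreement G ε u) ⊆ C := by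
  intro w hw
  rw [mem_filter, SimpleGraph.mem_neighborFinset] at hw
  have hadj : (tildeGraph G ε).Adj u w := ⟨hw.1, hw.2, Or.inl hheavy⟩
  exact hC.mem_of_reachable hu hadj.reachable

end AgreementDecomposition

/-- Property 1: for every nontrivial cluster `C` of the agreement decomposition
and every `u ∈ C`, `|N(u) ∩ C| ≥ (1 − 3ε)·|N(u)|`. -/
theorem cluster_nbr_inter_cluster_ge_of_nbr :
    ∃ ε₀ : ℝ, 0 < ε₀ ∧
      ∀ (V : Type) (_ : Fintype V) (_ : DecidableEq V)
        (G : SimpleGraph V) (_ : DecidableRel G.Adj) (ε : ℝ), 0 < ε → ε < ε₀ →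
        ∀ C : Finset V, IsCluster G ε C → 1 < C.card →
          ∀ u ∈ C, (1 - 3 * ε) * ((G.neighborFinset u).card : ℝ) ≤
            ((G.neighborFinset u ∩ C).card : ℝ) := by
  refine ⟨1 / 3, by norm_num, ?_⟩
  intro V _ _ G _ ε hε hε₃ C hC hC₁ u hu
  obtain ⟨v, huv⟩ := hC.exists_adj hC₁ hu
  rcases huv.2.2 with hheavy | hheavy
  · have hsub := filter_inAgreement_subset_of_heavy hC hu hheavy
    calc (1 - 3 * ε) * (#(G.neighborFinset u) : ℝ) ≤ (1 - ε) * #(G.neighborFinset u) := by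
          gcongr; linarith
      _ ≤ #((G.neighborFinset u).filter (InAgreement G ε u)) := hheavy.le
      _ ≤ #(G.neighborFinset u ∩ C) := by
          exact_mod_cast card_le_card (subset_inter (filter_subset _ _) hsub)
  · have hsub := filter_inAgreement_subset_of_heavy hC (hC.mem_of_reachable hu huv.reachable)
      hheavy
    refine (one_sub_three_mul_card_le_card_inter hε.le hε₃.le (filter_subset _ _) huv.2.1
      hheavy).trans ?_
    exact_mod_cast card_le_card (inter_subset_inter_left hsub)
end

section
/- Fix a natural number n ≥ 2, a real ε ∈ (0, 1), and a natural number k with k ≥ 300·(log n)/ε. Let A and B be nonempty finite subsets of a type V, and suppose A and B are NOT in ε-agreement, i.e., |A △ B| ≥ ε·max(|A|, |B|). Then under the product measure of k independent uniform samples r₁,…,r_k from A and k independent uniform samples s₁,…,s_k from B, the probability of the event {#{i : rᵢ ∈ A \ B} < 0.4·ε·k and #{i : sᵢ ∈ B \ A} < 0.4·ε·k} (i.e., the event that the ProbabilisticAgreement procedure outputs 'YES') is at most 1/n³. -/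
open scoped symmDiff ENNReal

private lemma log_five_quarters : Real.log (5/4) ≤ 0.225 := by
  rw [Real.log_le_iff_le_exp (by norm_num)]
  have h := Real.sum_le_exp_of_nonneg (x := 0.225) (by norm_num) 3
  have h2 : (∑ i ∈ Finset.range 3, (0.225:ℝ)^i / (i.factorial : ℝ)) = 1 + 0.225 + 0.225^2/2 := by
    norm_num [Finset.sum_range_succ, Nat.factorial]
  rw [h2] at h
  nlinarith

private lemma core_count {α : Type*} [Fintype α]
    (p : α → Prop) [DecidablePred p]
    {ε : ℝ} (hε0 : 0 < ε) (hε1 : ε < 1)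
    {n k : ℕ} (hn : 2 ≤ n) (hk : 300 * Real.log n / ε ≤ (k : ℝ))
    (hm : ε / 2 * (Fintype.card α : ℝ) ≤ ((Finset.univ.filter p).card : ℝ)) :
    ((Finset.univ.filter (fun f : Fin k → α =>
        ((Finset.univ.filter (fun i => p (f i))).card : ℝ) < 0.4 * ε * k)).card) * n ^ 3
      ≤ (Fintype.card α) ^ k := by
  have ha0 : (0:ℝ) ≤ (Fintype.card α : ℝ) := Nat.cast_nonneg _
  have hma : ((Finset.univ.filter p).card : ℝ) ≤ (Fintype.card α : ℝ) := by
    exact_mod_cast (Finset.card_filter_le _ _).trans_eq (by simp)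
  have hk0 : (0:ℝ) ≤ (k:ℝ) := Nat.cast_nonneg _
  have hlogn : 0 ≤ Real.log n := Real.log_nonneg (by exact_mod_cast hn.trans' (by norm_num))
  have hεk : 300 * Real.log n ≤ ε * k := by
    rw [div_le_iff₀ hε0] at hk; linarith
  set a : ℝ := (Fintype.card α : ℝ) with ha_def
  set m : ℝ := ((Finset.univ.filter p).card : ℝ) with hm_def
  set S := Finset.univ.filter (fun f : Fin k → α =>
      ((Finset.univ.filter (fun i => p (f i))).card : ℝ) < 0.4 * ε * k) with hS_def
  set T : (Fin k → α) → ℕ := fun f => (Finset.univ.filter (fun i => p (f i))).card with hT_def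
  -- Step A : pay a factor (5/4)^(0.4εk)·(4/5)^(T f) ≥ 1 for each f in S
  have stepA : (S.card : ℝ) ≤
      ∑ f : Fin k → α, (5/4:ℝ) ^ (0.4*ε*(k:ℝ)) * (4/5:ℝ) ^ (T f) := by
    calc (S.card : ℝ) = ∑ f ∈ S, (1:ℝ) := by simp
    _ ≤ ∑ f ∈ S, (5/4:ℝ) ^ (0.4*ε*(k:ℝ)) * (4/5:ℝ) ^ (T f) := by
        refine Finset.sum_le_sum fun f hf => ?_
        have hf' : (T f : ℝ) < 0.4*ε*k := (Finset.mem_filter.mp hf).2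
        have key : (5/4:ℝ) ^ (0.4*ε*(k:ℝ)) * (4/5:ℝ) ^ (T f)
            = (5/4:ℝ) ^ (0.4*ε*(k:ℝ) - (T f : ℝ)) := by
          rw [Real.rpow_sub (by norm_num), Real.rpow_natCast,
            eq_div_iff (by positivity), mul_assoc, ← mul_pow]
          norm_num
        rw [key]
        calc (1:ℝ) = (5/4:ℝ) ^ (0:ℝ) := (Real.rpow_zero _).symm
        _ ≤ (5/4:ℝ) ^ (0.4*ε*(k:ℝ) - (T f : ℝ)) :=
            Real.rpow_le_rpow_of_exponent_le (by norm_num) (by linarith)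
    _ ≤ ∑ f : Fin k → α, (5/4:ℝ) ^ (0.4*ε*(k:ℝ)) * (4/5:ℝ) ^ (T f) := by
        refine Finset.sum_le_sum_of_subset_of_nonneg (Finset.subset_univ _) fun f _ _ => ?_
        positivity
  -- Step B : the generating-function identity
  have stepB : ∑ f : Fin k → α, (4/5:ℝ) ^ (T f) = (a - m/5) ^ k := by
    have h1 : ∀ f : Fin k → α, (4/5:ℝ) ^ (T f) = ∏ i, (if p (f i) then (4/5:ℝ) else 1) := by
      intro f
      rw [hT_def, Finset.prod_ite, Finset.prod_const, Finset.prod_const_one, mul_one]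
    simp_rw [h1]
    rw [← Fintype.prod_sum (fun _ : Fin k => fun x : α => if p x then (4/5:ℝ) else 1)]
    have h2 : (∑ x : α, if p x then (4/5:ℝ) else 1) = a - m/5 := by
      rw [Finset.sum_ite, Finset.sum_const, Finset.sum_const, nsmul_eq_mul, nsmul_eq_mul,
        mul_one]
      have h3 : ((Finset.univ.filter (fun x => ¬ p x)).card : ℝ) = a - m := by
        have h := Finset.card_filter_add_card_filter_not
          (s := (Finset.univ : Finset α)) p
        rw [Finset.card_univ] at h
        rw [ha_def, hm_def, ← h]
        push_cast
        ring
      rw [h3, hm_def]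
      ring
    rw [h2, Finset.prod_const, Finset.card_univ, Fintype.card_fin]
  -- Step C : exponential bound
  have h5 : a - m/5 ≤ a * (1 - ε/10) := by nlinarith
  have h6 : (0:ℝ) ≤ a - m/5 := by nlinarith
  have h7 : a * (1 - ε/10) ≤ a * Real.exp (-(ε/10)) := by
    have := Real.add_one_le_exp (-(ε/10)); nlinarith
  have stepC : (a - m/5)^k ≤ a^k * Real.exp (-(ε/10) * k) := by
    calc (a - m/5)^k ≤ (a * Real.exp (-(ε/10)))^k := pow_le_pow_left₀ h6 (h5.trans h7) k
    _ = a^k * Real.exp (-(ε/10) * k) := by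
        rw [mul_pow, ← Real.exp_nat_mul, mul_comm ((k:ℝ))]
  -- Put everything together
  have hE : (5/4:ℝ) ^ (0.4*ε*(k:ℝ)) = Real.exp (Real.log (5/4) * (0.4*ε*k)) :=
    Real.rpow_def_of_pos (by norm_num) _
  have hEpos : (0:ℝ) ≤ (5/4:ℝ) ^ (0.4*ε*(k:ℝ)) := le_of_lt (Real.rpow_pos_of_pos (by norm_num) _)
  have hchain : (S.card : ℝ) ≤ a^k * Real.exp (Real.log (5/4) * (0.4*ε*k) + (-(ε/10) * k)) := by
    calc (S.card : ℝ) ≤ (5/4:ℝ) ^ (0.4*ε*(k:ℝ)) * ∑ f : Fin k → α, (4/5:ℝ) ^ (T f) := by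
          rw [Finset.mul_sum]; exact stepA
    _ = (5/4:ℝ) ^ (0.4*ε*(k:ℝ)) * (a - m/5)^k := by rw [stepB]
    _ ≤ (5/4:ℝ) ^ (0.4*ε*(k:ℝ)) * (a^k * Real.exp (-(ε/10) * k)) := by
          exact mul_le_mul_of_nonneg_left stepC hEpos
    _ = a^k * Real.exp (Real.log (5/4) * (0.4*ε*k) + (-(ε/10) * k)) := by
          rw [hE, Real.exp_add]; ring
  have hexp : Real.exp (Real.log (5/4) * (0.4*ε*k) + (-(ε/10) * k)) ≤ Real.exp (-(3 * Real.log n)) := by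
    apply Real.exp_le_exp.mpr
    have hL : Real.log (5/4) * (0.4*ε*k) ≤ 0.225 * (0.4*ε*k) := by
      apply mul_le_mul_of_nonneg_right log_five_quarters
      positivity
    nlinarith
  have hn0 : (0:ℝ) < (n:ℝ) := by exact_mod_cast hn.trans' (by norm_num)
  have hexpn : Real.exp (-(3 * Real.log n)) = 1 / (n:ℝ)^3 := by
    have hlp : Real.log ((n:ℝ)^3) = 3 * Real.log n := by
      rw [Real.log_pow]; push_cast; ring
    rw [← hlp, Real.exp_neg, Real.exp_log (by positivity), one_div]
  have final : (S.card : ℝ) * (n:ℝ)^3 ≤ a^k := by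
    have hak : (0:ℝ) ≤ a ^ k := by positivity
    have := hchain.trans (by
      calc a^k * Real.exp (Real.log (5/4) * (0.4*ε*k) + (-(ε/10) * k))
          ≤ a^k * Real.exp (-(3 * Real.log n)) := mul_le_mul_of_nonneg_left hexp hak
      _ = a^k * (1 / (n:ℝ)^3) := by rw [hexpn])
    have hn3 : (0:ℝ) < (n:ℝ)^3 := by positivity
    calc (S.card : ℝ) * (n:ℝ)^3 ≤ (a^k * (1 / (n:ℝ)^3)) * (n:ℝ)^3 :=
          mul_le_mul_of_nonneg_right this (le_of_lt hn3)
    _ = a^k := by field_simp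
  rw [ha_def] at final
  exact_mod_cast final


private lemma measure_cyl_aux {X T n : ℕ} (hT : X * n ^ 3 ≤ T) (hT0 : T ≠ 0) :
    (X : ℝ≥0∞) * ((T : ℝ≥0∞))⁻¹ ≤ 1 / (n : ℝ≥0∞) ^ 3 := by
  have hn3 : ((n : ℝ≥0∞)) ^ 3 ≠ ∞ := by simp
  have h1 : (X : ℝ≥0∞) ≤ (T : ℝ≥0∞) / (n : ℝ≥0∞) ^ 3 := by
    rw [ENNReal.le_div_iff_mul_le (Or.inr (by simp [hT0])) (Or.inl hn3)]
    calc (X : ℝ≥0∞) * (n : ℝ≥0∞) ^ 3 = ((X * n ^ 3 : ℕ) : ℝ≥0∞) := by push_cast; ring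
    _ ≤ (T : ℝ≥0∞) := by exact_mod_cast hT
  calc (X : ℝ≥0∞) * ((T : ℝ≥0∞))⁻¹ ≤ ((T : ℝ≥0∞) / (n : ℝ≥0∞) ^ 3) * ((T : ℝ≥0∞))⁻¹ :=
        mul_le_mul_left h1 _
  _ = ((T : ℝ≥0∞) * ((T : ℝ≥0∞))⁻¹) * ((n : ℝ≥0∞) ^ 3)⁻¹ := by
        rw [div_eq_mul_inv]; ring
  _ = 1 / (n : ℝ≥0∞) ^ 3 := by
        rw [ENNReal.mul_inv_cancel (by exact_mod_cast hT0) (by simp), one_mul, one_div]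

private lemma measure_cyl₁ {α β : Type*} [Fintype α] [Fintype β] [Nonempty α] [Nonempty β]
    {k n : ℕ} (p : α → Prop) [DecidablePred p] (t : ℝ)
    (hcount : ((Finset.univ.filter (fun f : Fin k → α =>
        ((Finset.univ.filter (fun i => p (f i))).card : ℝ) < t)).card) * n ^ 3
        ≤ (Fintype.card α) ^ k) :
    (PMF.uniformOfFintype ((Fin k → α) × (Fin k → β))).toOuterMeasure
        {ω | ((Finset.univ.filter (fun i : Fin k => p (ω.1 i))).card : ℝ) < t}
      ≤ 1 / (n : ℝ≥0∞) ^ 3 := by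
  rw [PMF.toOuterMeasure_apply_fintype]
  simp only [PMF.uniformOfFintype_apply, Set.indicator_apply, Set.mem_setOf_eq]
  rw [Finset.sum_ite, Finset.sum_const, Finset.sum_const_zero, add_zero, nsmul_eq_mul]
  have hfil : (Finset.univ.filter (fun ω : (Fin k → α) × (Fin k → β) =>
      ((Finset.univ.filter (fun i => p (ω.1 i))).card : ℝ) < t))
      = (Finset.univ.filter (fun f : Fin k → α =>
      ((Finset.univ.filter (fun i => p (f i))).card : ℝ) < t)) ×ˢ Finset.univ := by
    ext ⟨f, g⟩
    simp
  rw [hfil, Finset.card_product]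
  have hcard : Fintype.card ((Fin k → α) × (Fin k → β))
      = (Fintype.card α) ^ k * ((Fintype.card β) ^ k) := by
    simp [Fintype.card_fun]
  rw [hcard]
  have hT0 : (Fintype.card α) ^ k * ((Fintype.card β) ^ k) ≠ 0 := by
    positivity
  have hcount2 : (Finset.univ.filter (fun f : Fin k → α =>
        ((Finset.univ.filter (fun i => p (f i))).card : ℝ) < t)).card * (Finset.univ : Finset (Fin k → β)).card * n ^ 3
      ≤ (Fintype.card α) ^ k * ((Fintype.card β) ^ k) := by
    have hb : ((Finset.univ : Finset (Fin k → β)).card : ℕ) = Fintype.card (Fin k → β) := rfl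
    rw [hb, Fintype.card_fun, Fintype.card_fin]
    calc _ = ((Finset.univ.filter (fun f : Fin k → α =>
        ((Finset.univ.filter (fun i => p (f i))).card : ℝ) < t)).card * n ^ 3)
          * (Fintype.card β) ^ k := by ring
    _ ≤ (Fintype.card α) ^ k * ((Fintype.card β) ^ k) :=
        Nat.mul_le_mul_right _ hcount
  have := measure_cyl_aux hcount2 hT0
  calc (((Finset.univ.filter (fun f : Fin k → α =>
        ((Finset.univ.filter (fun i => p (f i))).card : ℝ) < t)).card * Finset.univ.card : ℕ) : ℝ≥0∞)
        * ((((Fintype.card α) ^ k * ((Fintype.card β) ^ k) : ℕ)) : ℝ≥0∞)⁻¹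
      = ((((Finset.univ.filter (fun f : Fin k → α =>
        ((Finset.univ.filter (fun i => p (f i))).card : ℝ) < t)).card * Finset.univ.card) : ℕ) : ℝ≥0∞)
        * ((((Fintype.card α) ^ k * ((Fintype.card β) ^ k) : ℕ) : ℝ≥0∞))⁻¹ := by push_cast; ring
  _ ≤ 1 / (n : ℝ≥0∞) ^ 3 := this

private lemma measure_cyl₂ {α β : Type*} [Fintype α] [Fintype β] [Nonempty α] [Nonempty β]
    {k n : ℕ} (p : β → Prop) [DecidablePred p] (t : ℝ)
    (hcount : ((Finset.univ.filter (fun f : Fin k → β =>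
        ((Finset.univ.filter (fun i => p (f i))).card : ℝ) < t)).card) * n ^ 3
        ≤ (Fintype.card β) ^ k) :
    (PMF.uniformOfFintype ((Fin k → α) × (Fin k → β))).toOuterMeasure
        {ω | ((Finset.univ.filter (fun i : Fin k => p (ω.2 i))).card : ℝ) < t}
      ≤ 1 / (n : ℝ≥0∞) ^ 3 := by
  rw [PMF.toOuterMeasure_apply_fintype]
  simp only [PMF.uniformOfFintype_apply, Set.indicator_apply, Set.mem_setOf_eq]
  rw [Finset.sum_ite, Finset.sum_const, Finset.sum_const_zero, add_zero, nsmul_eq_mul]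
  have hfil : (Finset.univ.filter (fun ω : (Fin k → α) × (Fin k → β) =>
      ((Finset.univ.filter (fun i => p (ω.2 i))).card : ℝ) < t))
      = (Finset.univ : Finset (Fin k → α)) ×ˢ (Finset.univ.filter (fun g : Fin k → β =>
      ((Finset.univ.filter (fun i => p (g i))).card : ℝ) < t)) := by
    ext ⟨f, g⟩
    simp
  rw [hfil, Finset.card_product]
  have hcard : Fintype.card ((Fin k → α) × (Fin k → β))
      = (Fintype.card α) ^ k * ((Fintype.card β) ^ k) := by
    simp [Fintype.card_fun]
  rw [hcard]
  have hT0 : (Fintype.card α) ^ k * ((Fintype.card β) ^ k) ≠ 0 := by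
    positivity
  have hcount2 : (Finset.univ : Finset (Fin k → α)).card * (Finset.univ.filter (fun g : Fin k → β =>
        ((Finset.univ.filter (fun i => p (g i))).card : ℝ) < t)).card * n ^ 3
      ≤ (Fintype.card α) ^ k * ((Fintype.card β) ^ k) := by
    have hb : ((Finset.univ : Finset (Fin k → α)).card : ℕ) = Fintype.card (Fin k → α) := rfl
    rw [hb, Fintype.card_fun, Fintype.card_fin]
    calc _ = ((Finset.univ.filter (fun g : Fin k → β =>
        ((Finset.univ.filter (fun i => p (g i))).card : ℝ) < t)).card * n ^ 3)
          * (Fintype.card α) ^ k := by ring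
    _ ≤ (Fintype.card β) ^ k * ((Fintype.card α) ^ k) :=
        Nat.mul_le_mul_right _ hcount
    _ = (Fintype.card α) ^ k * ((Fintype.card β) ^ k) := by ring
  have := measure_cyl_aux hcount2 hT0
  exact this


set_option maxHeartbeats 1000000 in
/-- Soundness of `ProbabilisticAgreement`: if `A` and `B` are NOT in
`ε`-agreement (`|A △ B| ≥ ε·max(|A|,|B|)`), then, drawing `k` independent
uniform samples from `A` and `k` independent uniform samples from `B`
(modelled by the uniform distribution on the product space
`(Fin k → A) × (Fin k → B)`), the probability that fewer than `0.4·ε·k` of the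
`A`-samples land in `A \ B` AND fewer than `0.4·ε·k` of the `B`-samples land
in `B \ A` (i.e. that the procedure outputs "YES") is at most `1/n³`. -/
theorem probabilisticAgreement_yes_prob_le {V : Type*} [DecidableEq V]
    (n : ℕ) (hn : 2 ≤ n) (ε : ℝ) (hε0 : 0 < ε) (hε1 : ε < 1)
    (k : ℕ) (hk : 300 * Real.log n / ε ≤ (k : ℝ))
    (A B : Finset V) [Nonempty (A : Type _)] [Nonempty (B : Type _)]
    (hdisagree : ε * (max A.card B.card : ℕ) ≤ ((A ∆ B).card : ℝ)) :
    (PMF.uniformOfFintype ((Fin k → A) × (Fin k → B))).toOuterMeasure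
        {ω | ((Finset.univ.filter
                (fun i : Fin k => (ω.1 i : V) ∈ A \ B)).card : ℝ) < 0.4 * ε * k ∧
             ((Finset.univ.filter
                (fun i : Fin k => (ω.2 i : V) ∈ B \ A)).card : ℝ) < 0.4 * ε * k}
      ≤ 1 / (n : ℝ≥0∞) ^ 3 := by
  have hsd : ((A ∆ B).card : ℝ) = ((A \ B).card : ℝ) + ((B \ A).card : ℝ) := by
    have : (A ∆ B).card = (A \ B).card + (B \ A).card := by
      rw [symmDiff_def, Finset.sup_eq_union,
        Finset.card_union_of_disjoint disjoint_sdiff_sdiff]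
    exact_mod_cast this
  have hmaxA : (A.card : ℝ) ≤ ((max A.card B.card : ℕ) : ℝ) := by
    exact_mod_cast le_max_left A.card B.card
  have hmaxB : (B.card : ℝ) ≤ ((max A.card B.card : ℕ) : ℝ) := by
    exact_mod_cast le_max_right A.card B.card
  have hε2 : (0:ℝ) ≤ ε/2 := by linarith
  by_cases hc : ε/2 * ((max A.card B.card : ℕ) : ℝ) ≤ ((A \ B).card : ℝ)
  · refine le_trans (MeasureTheory.measure_mono
      (t := {ω : (Fin k → A) × (Fin k → B) | ((Finset.univ.filter
        (fun i : Fin k => (ω.1 i : V) ∈ A \ B)).card : ℝ) < 0.4 * ε * k})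
      (fun ω hω => hω.1)) ?_
    apply measure_cyl₁ (fun x : A => (x : V) ∈ A \ B)
    apply core_count (fun x : A => (x : V) ∈ A \ B) hε0 hε1 hn hk
    have hcA : (Finset.univ.filter (fun x : A => (x : V) ∈ A \ B)).card = (A \ B).card := by
      rw [Finset.univ_eq_attach, Finset.filter_attach (fun v : V => v ∈ A \ B) A,
        Finset.card_map, Finset.card_attach]
      congr 1
      ext x
      simp [Finset.mem_sdiff]
    rw [hcA, Fintype.card_coe]
    calc ε/2 * (A.card : ℝ) ≤ ε/2 * ((max A.card B.card : ℕ) : ℝ) :=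
          mul_le_mul_of_nonneg_left hmaxA hε2
    _ ≤ ((A \ B).card : ℝ) := hc
  · have hc2 : ε/2 * ((max A.card B.card : ℕ) : ℝ) ≤ ((B \ A).card : ℝ) := by
      push_neg at hc
      linarith
    refine le_trans (MeasureTheory.measure_mono
      (t := {ω : (Fin k → A) × (Fin k → B) | ((Finset.univ.filter
        (fun i : Fin k => (ω.2 i : V) ∈ B \ A)).card : ℝ) < 0.4 * ε * k})
      (fun ω hω => hω.2)) ?_
    apply measure_cyl₂ (fun x : B => (x : V) ∈ B \ A)
    apply core_count (fun x : B => (x : V) ∈ B \ A) hε0 hε1 hn hk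
    have hcB : (Finset.univ.filter (fun x : B => (x : V) ∈ B \ A)).card = (B \ A).card := by
      rw [Finset.univ_eq_attach, Finset.filter_attach (fun v : V => v ∈ B \ A) B,
        Finset.card_map, Finset.card_attach]
      congr 1
      ext x
      simp [Finset.mem_sdiff]
    rw [hcB, Fintype.card_coe]
    calc ε/2 * (B.card : ℝ) ≤ ε/2 * ((max A.card B.card : ℕ) : ℝ) :=
          mul_le_mul_of_nonneg_left hmaxB hε2
    _ ≤ ((B \ A).card : ℝ) := hc2
end

section
/- Fix a natural number n ≥ 2, a real ε ∈ (0, 1), and a natural number k with k ≥ 300·(log n)/ε. Let A and B be nonempty finite subsets of a type V, and suppose A and B are in (0.1·ε)-agreement, i.e., |A △ B| < 0.1·ε·max(|A|, |B|). Then under the product measure of k independent uniform samples r₁,…,r_k from A and k independent uniform samples s₁,…,s_k from B, the probability of the event {#{i : rᵢ ∈ A \ B} ≥ 0.4·ε·k or #{i : sᵢ ∈ B \ A} ≥ 0.4·ε·k} (i.e., the event that the ProbabilisticAgreement procedure outputs 'NO') is at most 1/n³. -/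
/-! Take `m = ⌈0.4εk⌉`. By a union bound over the two sides it suffices that, for `k` uniform
samples from `C` and `D ⊆ C` with `q = |D|/|C| < ε/9` (which is what `0.1ε`-agreement gives), at
least `m` samples land in `D` with probability at most `1/(2n³)`. Choosing which `m` samples land
in `D` bounds that probability by `C(k,m) qᵐ ≤ (e k q / m)ᵐ ≤ (e/3.6)ᵐ ≤ (5/6)ᵐ`, and
`m ≥ 120 log n` makes this at most `1/(2n³)`. -/

open Finset Real
open scoped Nat symmDiff ENNReal

section Counting
variable {ι α : Type*} [Fintype ι] [DecidableEq ι] [Fintype α] (p : α → Prop) [DecidablePred p]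

theorem card_pi_filter_forall_mem (S : Finset ι) :
    #{f : ι → α | ∀ i ∈ S, p (f i)} =
      #{a | p a} ^ #S * Fintype.card α ^ (Fintype.card ι - #S) := by
  have hpi : ({f : ι → α | ∀ i ∈ S, p (f i)} : Finset _) =
      Fintype.piFinset fun i ↦ if i ∈ S then ({a | p a} : Finset α) else univ := by
    ext f
    simp only [mem_filter, mem_univ, true_and, Fintype.mem_piFinset]
    refine forall_congr' fun i ↦ ?_
    split_ifs <;> simp [*]
  simp_rw [hpi, Fintype.card_piFinset, apply_ite card]
  rw [prod_ite, filter_mem_eq_inter, ← sdiff_eq_filter, univ_inter, prod_const, prod_const,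
    card_univ_sdiff, card_univ]

theorem card_pi_filter_le_card_filter_le_choose_mul (m : ℕ) :
    #{f : ι → α | m ≤ #{i | p (f i)}} ≤
      (Fintype.card ι).choose m * #{a | p a} ^ m * Fintype.card α ^ (Fintype.card ι - m) := by
  classical
  calc #{f : ι → α | m ≤ #{i | p (f i)}}
      ≤ #((univ.powersetCard m).biUnion
          fun S ↦ ({f : ι → α | ∀ i ∈ S, p (f i)} : Finset _)) := by
        refine card_le_card fun f hf ↦ ?_
        obtain ⟨S, hS, hcard⟩ := exists_subset_card_eq (mem_filter.mp hf).2
        refine mem_biUnion.mpr ⟨S, mem_powersetCard.mpr ⟨subset_univ S, hcard⟩, ?_⟩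
        simpa using fun i hi ↦ (mem_filter.mp (hS hi)).2
    _ ≤ ∑ S ∈ univ.powersetCard m, #{f : ι → α | ∀ i ∈ S, p (f i)} := card_biUnion_le
    _ = ∑ S ∈ univ.powersetCard m, #{a | p a} ^ m * Fintype.card α ^ (Fintype.card ι - m) := by
        refine sum_congr rfl fun S hS ↦ ?_
        rw [card_pi_filter_forall_mem, (mem_powersetCard.mp hS).2]
    _ = _ := by rw [sum_const, card_powersetCard, card_univ, smul_eq_mul, mul_assoc]

theorem PMF.toOuterMeasure_uniformOfFintype_pi_le_choose_mul_pow [Nonempty α] (m : ℕ) :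
    (PMF.uniformOfFintype (ι → α)).toOuterMeasure {f | m ≤ #{i | p (f i)}} ≤
      ENNReal.ofReal ((Fintype.card ι).choose m * (#{a | p a} / Fintype.card α : ℝ) ^ m) := by
  set k := Fintype.card ι
  set N := Fintype.card α
  have hN : (0 : ℝ) < N := by exact_mod_cast Fintype.card_pos
  have hcount : (#{f : ι → α | m ≤ #{i | p (f i)}} : ℝ) ≤
      k.choose m * (#{a | p a} / N : ℝ) ^ m * (N : ℝ) ^ k := by
    have := card_pi_filter_le_card_filter_le_choose_mul (ι := ι) p m
    rcases le_or_gt m k with hmk | hkm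
    · calc (#{f : ι → α | m ≤ #{i | p (f i)}} : ℝ)
          ≤ k.choose m * #{a | p a} ^ m * (N : ℝ) ^ (k - m) := by exact_mod_cast this
        _ = k.choose m * (#{a | p a} / N : ℝ) ^ m * (N : ℝ) ^ k := by
          rw [div_pow, pow_sub₀ _ hN.ne' hmk]
          field_simp
    · rw [Nat.choose_eq_zero_of_lt hkm, zero_mul, zero_mul] at this
      rw [Nat.le_zero.mp this, Nat.cast_zero]
      positivity
  rw [PMF.toOuterMeasure_uniformOfFintype_apply, Fintype.card_fun, Fintype.card_subtype,
    ← ENNReal.ofReal_natCast, ← ENNReal.ofReal_natCast, ← ENNReal.ofReal_div_of_pos (by positivity)]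
  refine ENNReal.ofReal_le_ofReal ?_
  rw [div_le_iff₀ (by positivity)]
  exact_mod_cast hcount

end Counting

namespace PMF
variable {α β : Type*} [Fintype α] [Fintype β] [Nonempty α] [Nonempty β]

theorem toOuterMeasure_uniformOfFintype_fst_preimage (s : Set α) :
    (uniformOfFintype (α × β)).toOuterMeasure (Prod.fst ⁻¹' s) =
      (uniformOfFintype α).toOuterMeasure s := by
  classical
  have hcard : Fintype.card (Prod.fst ⁻¹' s : Set (α × β)) = Fintype.card s * Fintype.card β :=
    (Fintype.card_congr (Equiv.prodSubtypeFstEquivSubtypeProd (p := (· ∈ s)))).trans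
      (Fintype.card_prod _ _)
  rw [toOuterMeasure_uniformOfFintype_apply, toOuterMeasure_uniformOfFintype_apply, hcard,
    Fintype.card_prod, Nat.cast_mul, Nat.cast_mul,
    ENNReal.mul_div_mul_right _ _ (by simp) (by simp)]

theorem toOuterMeasure_uniformOfFintype_snd_preimage (s : Set β) :
    (uniformOfFintype (α × β)).toOuterMeasure (Prod.snd ⁻¹' s) =
      (uniformOfFintype β).toOuterMeasure s := by
  classical
  have hcard : Fintype.card (Prod.snd ⁻¹' s : Set (α × β)) = Fintype.card α * Fintype.card s :=
    (Fintype.card_congr (((Equiv.prodComm α β).subtypeEquiv fun _ ↦ Iff.rfl).trans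
      (Equiv.prodSubtypeFstEquivSubtypeProd (p := (· ∈ s))))).trans
      ((Fintype.card_prod _ _).trans (mul_comm _ _))
  rw [toOuterMeasure_uniformOfFintype_apply, toOuterMeasure_uniformOfFintype_apply, hcard,
    Fintype.card_prod, Nat.cast_mul, Nat.cast_mul,
    ENNReal.mul_div_mul_left _ _ (by simp) (by simp)]

end PMF

theorem Nat.choose_mul_pow_le_exp_one_mul_div_pow (k m : ℕ) {q : ℝ} (hq : 0 ≤ q) :
    k.choose m * q ^ m ≤ (exp 1 * k * q / m) ^ m := by
  rcases m.eq_zero_or_pos with rfl | hm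
  · simp
  have hm' : (0 : ℝ) < m := by exact_mod_cast hm
  have hfact : (m : ℝ) ^ m ≤ exp 1 ^ m * m ! := by
    have := Real.pow_div_factorial_le_exp _ hm'.le m
    rwa [div_le_iff₀ (by positivity), ← exp_one_pow] at this
  calc k.choose m * q ^ m ≤ k ^ m / m ! * q ^ m := by
        gcongr
        exact Nat.choose_le_pow_div m k
    _ = (k * q) ^ m / m ! := by ring
    _ ≤ (k * q) ^ m * exp 1 ^ m / m ^ m := by
        rw [div_le_div_iff₀ (by positivity) (by positivity), mul_assoc]
        gcongr
    _ = (exp 1 * k * q / m) ^ m := by ring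

theorem Nat.choose_mul_pow_le_five_sixths_pow {k m : ℕ} {q : ℝ} (hq : 0 ≤ q)
    (hm : 18 * k * q ≤ 5 * m) : k.choose m * q ^ m ≤ (5 / 6) ^ m := by
  refine (k.choose_mul_pow_le_exp_one_mul_div_pow m hq).trans
    (pow_le_pow_left₀ (by positivity) ?_ m)
  rcases m.eq_zero_or_pos with rfl | hm0
  · norm_num
  rw [div_le_iff₀ (by exact_mod_cast hm0)]
  have := exp_one_lt_d9
  have hkq : 0 ≤ (k : ℝ) * q := by positivity
  nlinarith

theorem five_sixths_pow_le_inv {n m : ℕ} (hn : 2 ≤ n) (hm : 24 * log n ≤ m) :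
    (5 / 6 : ℝ) ^ m ≤ (2 * (n : ℝ) ^ 3)⁻¹ := by
  have hn' : (2 : ℝ) ≤ n := by exact_mod_cast hn
  rw [show (5 / 6 : ℝ) = (6 / 5)⁻¹ by norm_num, inv_pow]
  refine inv_anti₀ (by positivity) ?_
  rw [← log_le_log_iff (by positivity) (by positivity), log_mul (by norm_num) (by positivity),
    log_pow, log_pow]
  have hlog2 : log 2 ≤ log n := log_le_log (by norm_num) hn'
  have hlog65 : (1 : ℝ) / 6 ≤ log (6 / 5) := by
    have := one_sub_inv_le_log_of_pos (x := 6 / 5) (by norm_num)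
    norm_num at this ⊢
    linarith
  have hlogn : 0 ≤ log n := log_nonneg (by linarith)
  push_cast
  nlinarith

theorem Finset.card_filter_coe_mem_of_subset {V : Type*} [DecidableEq V] {s t : Finset V}
    (h : t ⊆ s) : #{a : s | (a : V) ∈ t} = #t := by
  rw [show ({a : s | (a : V) ∈ t} : Finset s) = t.subtype (· ∈ s) by ext; simp, card_subtype,
    filter_true_of_mem h]

theorem Finset.nine_mul_card_sdiff_lt {V : Type*} [DecidableEq V] {A B : Finset V} {ε : ℝ}
    (hε : ε ≤ 1) (h : (#(A ∆ B) : ℝ) < 0.1 * ε * (max #A #B : ℕ)) :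
    9 * (#(A \ B) : ℝ) < ε * #A := by
  have hAB : #(A \ B) ≤ #(A ∆ B) := card_le_card (symmDiff_def A B ▸ le_sup_left)
  have hBA : #(B \ A) ≤ #(A ∆ B) := card_le_card (symmDiff_def A B ▸ le_sup_right)
  have hmax : max #A #B ≤ #A + #(A ∆ B) := by
    have := card_le_card_sdiff_add_card (s := B) (t := A)
    omega
  have hS : (0 : ℝ) ≤ #(A ∆ B) := Nat.cast_nonneg _
  have hε0 : 0 ≤ ε := by
    by_contra! hε0
    nlinarith [(Nat.cast_nonneg _ : (0 : ℝ) ≤ (max #A #B : ℕ))]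
  have : ((max #A #B : ℕ) : ℝ) ≤ #A + #(A ∆ B) := by exact_mod_cast hmax
  have : (#(A \ B) : ℝ) ≤ #(A ∆ B) := by exact_mod_cast hAB
  nlinarith

theorem PMF.toOuterMeasure_uniformOfFintype_count_mem_ge_le_inv {V : Type*} [DecidableEq V]
    {C D : Finset V} [Nonempty C] (hDC : D ⊆ C) {ε : ℝ} (hD : 9 * (#D : ℝ) ≤ ε * #C)
    {n k m : ℕ} (hn : 2 ≤ n) (hkm : 0.4 * ε * k ≤ m) (hm : 24 * log n ≤ m) :
    (uniformOfFintype (Fin k → C)).toOuterMeasure {f | m ≤ #{i | (f i : V) ∈ D}} ≤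
      ENNReal.ofReal (2 * (n : ℝ) ^ 3)⁻¹ := by
  refine (toOuterMeasure_uniformOfFintype_pi_le_choose_mul_pow (fun c : C ↦ (c : V) ∈ D) m).trans
    (ENNReal.ofReal_le_ofReal ?_)
  have hC : (0 : ℝ) < #C := by exact_mod_cast card_pos.mpr (nonempty_coe_sort.mp ‹_›)
  rw [Fintype.card_fin, Fintype.card_coe, card_filter_coe_mem_of_subset hDC]
  refine (Nat.choose_mul_pow_le_five_sixths_pow (by positivity) ?_).trans
    (five_sixths_pow_le_inv hn hm)
  rw [mul_div_assoc', div_le_iff₀ hC]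
  nlinarith [(Nat.cast_nonneg k : (0 : ℝ) ≤ k)]

/-- Completeness of `ProbabilisticAgreement`: if `A` and `B` are in
`0.1·ε`-agreement (`|A △ B| < 0.1·ε·max(|A|,|B|)`), then, drawing `k`
independent uniform samples from `A` and `k` independent uniform samples from
`B` (modelled by the uniform distribution on the product space
`(Fin k → A) × (Fin k → B)`), the probability that at least `0.4·ε·k` of the
`A`-samples land in `A \ B` OR at least `0.4·ε·k` of the `B`-samples land in
`B \ A` (i.e. that the procedure outputs "NO") is at most `1/n³`. -/
theorem probabilisticAgreement_no_prob_le {V : Type*} [DecidableEq V]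
    (n : ℕ) (hn : 2 ≤ n) (ε : ℝ) (hε0 : 0 < ε) (hε1 : ε < 1)
    (k : ℕ) (hk : 300 * Real.log n / ε ≤ (k : ℝ))
    (A B : Finset V) [Nonempty (A : Type _)] [Nonempty (B : Type _)]
    (hagree : ((A ∆ B).card : ℝ) < 0.1 * ε * (max A.card B.card : ℕ)) :
    (PMF.uniformOfFintype ((Fin k → A) × (Fin k → B))).toOuterMeasure
        {ω | 0.4 * ε * k ≤ ((Finset.univ.filter
                (fun i : Fin k => (ω.1 i : V) ∈ A \ B)).card : ℝ) ∨
             0.4 * ε * k ≤ ((Finset.univ.filter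
                (fun i : Fin k => (ω.2 i : V) ∈ B \ A)).card : ℝ)}
      ≤ 1 / (n : ℝ≥0∞) ^ 3 := by
  set m := ⌈0.4 * ε * k⌉₊
  have hkm : 0.4 * ε * k ≤ m := Nat.le_ceil _
  have hm : 24 * log n ≤ m := by
    have : 300 * log n ≤ ε * k := (div_le_iff₀' hε0).mp hk
    nlinarith [log_nonneg (one_le_two.trans (Nat.cast_le.mpr hn) : (1 : ℝ) ≤ n)]
  have hA := nine_mul_card_sdiff_lt hε1.le hagree
  have hB := nine_mul_card_sdiff_lt (A := B) (B := A) hε1.le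
    (by rwa [symmDiff_comm, max_comm])
  calc _ ≤ (PMF.uniformOfFintype ((Fin k → A) × (Fin k → B))).toOuterMeasure
          (Prod.fst ⁻¹' {f | m ≤ #{i | (f i : V) ∈ A \ B}} ∪
            Prod.snd ⁻¹' {g | m ≤ #{i | (g i : V) ∈ B \ A}}) :=
        MeasureTheory.measure_mono fun ω hω ↦ hω.imp Nat.ceil_le.mpr Nat.ceil_le.mpr
    _ ≤ ENNReal.ofReal (2 * (n : ℝ) ^ 3)⁻¹ + ENNReal.ofReal (2 * (n : ℝ) ^ 3)⁻¹ := by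
        refine (MeasureTheory.measure_union_le _ _).trans ?_
        rw [PMF.toOuterMeasure_uniformOfFintype_fst_preimage,
          PMF.toOuterMeasure_uniformOfFintype_snd_preimage]
        exact add_le_add
          (PMF.toOuterMeasure_uniformOfFintype_count_mem_ge_le_inv sdiff_subset hA.le hn hkm hm)
          (PMF.toOuterMeasure_uniformOfFintype_count_mem_ge_le_inv sdiff_subset hB.le hn hkm hm)
    _ = 1 / (n : ℝ≥0∞) ^ 3 := by
        rw [← ENNReal.ofReal_add (by positivity) (by positivity), ← two_mul, mul_inv, ← mul_assoc,
          mul_inv_cancel₀ two_ne_zero, one_mul, ENNReal.ofReal_inv_of_pos (by positivity),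
          ENNReal.ofReal_pow (by positivity), ENNReal.ofReal_natCast, one_div]
end
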